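/- A partition is uniquely determined by its s-core and its s-quotient; moreover, for any s-core σ and any (ℤ/sℤ)-tuple of partitions υ, there exists a partition with s-core σ and s-quotient υ. -/

import Mathlib

/-!
Put the beta-set `β₀(λ)` on an `s`-runner abacus. Runner `j`, `{z | j + s z ∈ β₀(λ)}`, is itself a
beta-set, namely `β_{c_j}(λ^(j))` for its charge `c_j`, and a set is recovered from its runners, so
`λ` is determined by the pairs `(c_j, λ^(j))`. Pushing the beads up turns runner `j` into
`{z | z < c_j}`, so the core records exactly the charges `c_j`. Charges add up over the runners;
hence, given a core with runner charges `c_j` and partitions `υ_j`, the set whose runners are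
`β_{c_j}(υ_j)` has charge `0`, and it is the beta-set of a partition with that core and quotient.
-/

open Classical

/-- A partition: an infinite weakly decreasing sequence of non-negative integers
with finite sum.  Here `f n` denotes the part `λ_{n+1}`. -/
structure SeqPartition where
  f : ℕ → ℕ
  antitone : ∀ ⦃m n : ℕ⦄, m ≤ n → f n ≤ f m
  eventually_zero : ∃ N, ∀ n, N ≤ n → f n = 0

instance : Inhabited SeqPartition :=
  ⟨⟨fun _ => 0, fun _ _ _ => le_rfl, ⟨0, fun _ _ => rfl⟩⟩⟩

namespace SeqPartition

/-- The beta-set `β_r(λ) = {λ_i - i + r : i ≥ 1}`. -/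
def beta (r : ℤ) (l : SeqPartition) : Set ℤ :=
  {x | ∃ n : ℕ, x = (l.f n : ℤ) - (n + 1) + r}

/-- The size `|λ|` of a partition. -/
noncomputable def size (l : SeqPartition) : ℕ := ∑ᶠ n, l.f n

/-- The partition whose beta-set (for some shift `r`) is `B`, if it exists. -/
noncomputable def ofBeta (B : Set ℤ) : SeqPartition :=
  if h : ∃ l : SeqPartition, ∃ r : ℤ, beta r l = B then h.choose else default

/-- The beta-set of the `s`-core: beads pushed up their runners as far as possible.
A position `x` is occupied iff the number of beads of `B` weakly above it on its runner
exceeds the number of gaps strictly below it on its runner. -/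
def coreBeta (s : ℕ) (B : Set ℤ) : Set ℤ :=
  {x | ({y : ℤ | y ∉ B ∧ y ≡ x [ZMOD (s : ℤ)] ∧ y < x}).ncard
      < ({b : ℤ | b ∈ B ∧ b ≡ x [ZMOD (s : ℤ)] ∧ x ≤ b}).ncard}

/-- The `s`-core of a partition. -/
noncomputable def core (s : ℕ) (l : SeqPartition) : SeqPartition :=
  ofBeta (coreBeta s (beta 0 l))

/-- `λ` is an `s`-core. -/
def IsCore (s : ℕ) (l : SeqPartition) : Prop := core s l = l

/-- The `s`-weight of `λ`. -/
noncomputable def wt (s : ℕ) (l : SeqPartition) : ℕ := (size l - size (core s l)) / s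

/-- The component of the `s`-quotient of `λ` indexed by `j : ZMod s`. -/
noncomputable def quot (s : ℕ) (l : SeqPartition) (j : ZMod s) : SeqPartition :=
  ofBeta {z : ℤ | ((j.val : ℤ) + (s : ℤ) * z) ∈ beta 0 l}

/-- The `s`-set entry `Γ_j(λ)`: the smallest integer in the class `j` mod `s`
not lying in the beta-set of the `s`-core of `λ`. -/
noncomputable def sSet (s : ℕ) (l : SeqPartition) (j : ZMod s) : ℤ :=
  sInf {x : ℤ | (x : ZMod s) = j ∧ x ∉ beta 0 (core s l)}

/-- `λ` is an `[s:t]`-core. -/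
def IsGenCore (s t : ℕ) (l : SeqPartition) : Prop :=
  wt s (core t l) = wt s l

/-- The level `t` action of the generator `w_i` of the affine symmetric group `W_s` on `ℤ`. -/
def genActZ (s t : ℕ) (i : ZMod s) (n : ℤ) : ℤ :=
  if (n : ZMod s) = (i - 1) * (t : ZMod s) - ((((s : ℤ) - 1) * ((t : ℤ) - 1) / 2 : ℤ) : ZMod s)
    then n + t
  else if (n : ZMod s) = i * (t : ZMod s) - ((((s : ℤ) - 1) * ((t : ℤ) - 1) / 2 : ℤ) : ZMod s)
    then n - t
  else n

/-- The level `t` action of the generator `w_i` of `W_s` on partitions, via beta-sets. -/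
noncomputable def genAct (s t : ℕ) (i : ZMod s) (l : SeqPartition) : SeqPartition :=
  ofBeta (genActZ s t i '' beta 0 l)

/-- The action of a word in the generators of `W_s`, at level `t`, on partitions. -/
noncomputable def wordAct (s t : ℕ) (w : List (ZMod s)) (l : SeqPartition) : SeqPartition :=
  w.foldr (genAct s t) l

/-- `λ` and `μ` lie in the same orbit for the level `t` action of `W_s`. -/
def SameOrbit (s t : ℕ) (l m : SeqPartition) : Prop :=
  ∃ w : List (ZMod s), wordAct s t w l = m

/-- `λ` and `μ` lie in the same orbit for the commuting actions of `W_s` (level `t`)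
and `W_t` (level `s`). -/
def SameOrbit2 (s t : ℕ) (l m : SeqPartition) : Prop :=
  ∃ a : List (ZMod s), ∃ b : List (ZMod t), wordAct s t a (wordAct t s b l) = m

/-- The `t`-weighted `s`-quotient of `λ`: the multiset of pairs
`(Γ_i(λ) + tℤ, λ^(i))` over `i ∈ ℤ/sℤ`. -/
noncomputable def twq (s t : ℕ) (l : SeqPartition) : Multiset (ZMod t × SeqPartition) :=
  ((List.range s).map (fun i =>
    (((sSet s l (i : ZMod s) : ℤ) : ZMod t), quot s l (i : ZMod s))) : Multiset _)

/-- The largest `(s,t)`-core `κ_{s,t}`: the partition whose beta-set is the set of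
integers not expressible as a non-negative integer combination of `s` and `t`. -/
noncomputable def kappa (s t : ℕ) : SeqPartition :=
  ofBeta {x : ℤ | ¬ ∃ a b : ℕ, x = (a : ℤ) * s + (b : ℤ) * t}

end SeqPartition

namespace SeqPartition

open Set

def IsBetaSet (B : Set ℤ) : Prop := (∃ a, Iio a ⊆ B) ∧ BddAbove B

lemma isBetaSet_Iio (c : ℤ) : IsBetaSet (Iio c) := ⟨⟨c, subset_rfl⟩, bddAbove_Iio⟩

def betaSeq (r : ℤ) (l : SeqPartition) (n : ℕ) : ℤ := l.f n - (n + 1) + r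

lemma beta_eq_range_betaSeq (r : ℤ) (l : SeqPartition) : beta r l = range (betaSeq r l) := by
  ext x
  simp only [beta, mem_ofPred_eq, mem_range, betaSeq, eq_comm]

lemma betaSeq_strictAnti (r : ℤ) (l : SeqPartition) : StrictAnti (betaSeq r l) :=
  strictAnti_nat_of_succ_lt fun n => by
    have := l.antitone (Nat.le_add_right n 1)
    simp only [betaSeq]
    push_cast
    omega

lemma Iio_subset_beta (r : ℤ) {l : SeqPartition} {N : ℕ} (hN : ∀ n, N ≤ n → l.f n = 0) :
    Iio (r - N - 1) ⊆ beta r l := fun x hx => by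
  rw [mem_Iio] at hx
  refine ⟨(r - x - 1).toNat, ?_⟩
  rw [hN _ (by omega)]
  omega

lemma isBetaSet_beta (r : ℤ) (l : SeqPartition) : IsBetaSet (beta r l) := by
  obtain ⟨N, hN⟩ := l.eventually_zero
  refine ⟨⟨_, Iio_subset_beta r hN⟩, l.f 0 + r, ?_⟩
  rintro x ⟨n, rfl⟩
  have := l.antitone n.zero_le
  omega

lemma beta_injective {r r' : ℤ} {l l' : SeqPartition} (h : beta r l = beta r' l') :
    r = r' ∧ l = l' := by
  rw [beta_eq_range_betaSeq, beta_eq_range_betaSeq] at h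
  replace h : betaSeq r l = betaSeq r' l' :=
    ((betaSeq_strictAnti r l).dual_right.range_inj (betaSeq_strictAnti r' l').dual_right).1 h
  obtain ⟨N, hN⟩ := l.eventually_zero
  obtain ⟨N', hN'⟩ := l'.eventually_zero
  obtain rfl : r = r' := by
    have := congrFun h (max N N')
    simp only [betaSeq, hN _ (le_max_left N N'), hN' _ (le_max_right N N')] at this
    omega
  obtain ⟨f, _, _⟩ := l
  obtain ⟨f', _, _⟩ := l'
  obtain rfl : f = f' := funext fun n => by
    have := congrFun h n
    simp only [betaSeq] at this
    omega
  exact ⟨rfl, rfl⟩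

lemma exists_beta_eq_range {e : ℕ → ℤ} (he : StrictAnti e) {N : ℕ} {c : ℤ}
    (hc : ∀ n, N ≤ n → e n + n = c) : ∃ l, beta (c + 1) l = range e := by
  have hmono : Antitone fun n : ℕ => e n + n :=
    antitone_nat_of_succ_le fun n => by
      have := he (Nat.lt_add_one n)
      push_cast
      omega
  have hge : ∀ n, c ≤ e n + n := fun n => hc _ (le_max_right n N) ▸ hmono (le_max_left n N)
  refine ⟨⟨fun n => (e n + n - c).toNat, fun m n hmn => ?_, N, fun n hn => ?_⟩, ?_⟩
  · have := hmono hmn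
    simp only at this
    omega
  · have := hc n hn
    omega
  · ext x
    simp only [beta, mem_ofPred_eq, mem_range]
    refine exists_congr fun n => ?_
    have := hge n
    omega

lemma IsBetaSet.exists_beta_eq {B : Set ℤ} (hB : IsBetaSet B) : ∃ l r, beta r l = B := by
  obtain ⟨⟨a, ha⟩, b, hb⟩ := hB
  -- `Nat.nth p` lists the elements of `B` in decreasing order, as distances below `b`
  set p : ℕ → Prop := fun k => b - k ∈ B
  obtain ⟨K, hK⟩ : ∃ K : ℕ, b - K < a := ⟨(b - a + 1).toNat, by omega⟩
  have hpK : ∀ k, K ≤ k → p k := fun k hk => ha (by rw [mem_Iio]; omega)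
  have hinf : (Set.ofPred p).Infinite :=
    infinite_of_forall_exists_gt fun k => ⟨max k K + 1, hpK _ (by omega), by omega⟩
  have hnth : ∀ i, Nat.nth p (Nat.count p K + i) = K + i := fun i => by
    rw [← Nat.nth_count (hpK (K + i) (by omega)), Nat.count_add,
      Nat.count_of_forall (p := fun k => p (K + k)) fun k _ => hpK _ (by omega)]
  obtain ⟨l, hl⟩ := exists_beta_eq_range (e := fun n => b - Nat.nth p n)
    (fun m n hmn => by simpa using Nat.nth_strictMono hinf hmn)
    (N := Nat.count p K) (c := b - K + Nat.count p K) fun n hn => by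
      obtain ⟨i, rfl⟩ := Nat.exists_eq_add_of_le hn
      simp only [hnth]
      push_cast
      ring
  refine ⟨l, _, hl.trans ?_⟩
  ext x
  constructor
  · rintro ⟨n, rfl⟩
    exact Nat.nth_mem_of_infinite hinf n
  · intro hx
    have hxb := hb hx
    obtain ⟨n, hn⟩ : (b - x).toNat ∈ range (Nat.nth p) := by
      rw [Nat.range_nth_of_infinite hinf]
      show b - ((b - x).toNat : ℕ) ∈ B
      rwa [Int.toNat_of_nonneg (by omega), sub_sub_cancel]
    exact ⟨n, by simp only [hn]; omega⟩

lemma ofBeta_beta (r : ℤ) (l : SeqPartition) : ofBeta (beta r l) = l := by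
  have h : ∃ l' : SeqPartition, ∃ r' : ℤ, beta r' l' = beta r l := ⟨l, r, rfl⟩
  rw [ofBeta, dif_pos h]
  exact (beta_injective h.choose_spec.choose_spec).2

lemma IsBetaSet.exists_beta_ofBeta {B : Set ℤ} (hB : IsBetaSet B) :
    ∃ r, beta r (ofBeta B) = B := by
  have h := hB.exists_beta_eq
  rw [ofBeta, dif_pos h]
  exact h.choose_spec

section Charge

/-- Only meaningful for beta-sets, where both sets are finite (`ncard` of an infinite set
is `0`). -/
noncomputable def chargeAt (B : Set ℤ) (z : ℤ) : ℤ := (B ∩ Ici z).ncard - (Bᶜ ∩ Iio z).ncard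

noncomputable def charge (B : Set ℤ) : ℤ := chargeAt B 0

variable {B : Set ℤ}

lemma IsBetaSet.finite_inter_Ici (hB : IsBetaSet B) (z : ℤ) : (B ∩ Ici z).Finite := by
  obtain ⟨_, b, hb⟩ := hB
  exact (finite_Icc z b).subset fun x hx => ⟨hx.2, hb hx.1⟩

lemma IsBetaSet.finite_compl_inter_Iio (hB : IsBetaSet B) (z : ℤ) : (Bᶜ ∩ Iio z).Finite := by
  obtain ⟨⟨a, ha⟩, _⟩ := hB
  exact (finite_Ico a z).subset fun x hx => ⟨not_lt.1 fun h => hx.1 (ha h), hx.2⟩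

lemma IsBetaSet.chargeAt_add_one (hB : IsBetaSet B) (z : ℤ) :
    chargeAt B (z + 1) = chargeAt B z - 1 := by
  have hIci : Ici z = insert z (Ici (z + 1)) := by ext; simp; omega
  have hIio : Iio (z + 1) = insert z (Iio z) := by ext; simp
  unfold chargeAt
  by_cases hz : z ∈ B
  · rw [hIci, inter_insert_of_mem hz, hIio, inter_insert_of_notMem (by simpa),
      ncard_insert_of_notMem (by simp) (hB.finite_inter_Ici _)]
    omega
  · rw [hIci, inter_insert_of_notMem hz, hIio, inter_insert_of_mem (by simpa),
      ncard_insert_of_notMem (by simp) (hB.finite_compl_inter_Iio _)]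
    omega

lemma IsBetaSet.chargeAt_eq (hB : IsBetaSet B) (z : ℤ) : chargeAt B z = charge B - z := by
  induction z using Int.induction_on with
  | zero => simp [charge]
  | succ k ih => rw [hB.chargeAt_add_one, ih]; ring
  | pred k ih =>
    have := hB.chargeAt_add_one (-k - 1)
    rw [sub_add_cancel, ih] at this
    linarith

lemma charge_Iio (c : ℤ) : charge (Iio c) = c := by
  have h₁ : Iio c ∩ Ici c = ∅ := by ext; simp
  have := (isBetaSet_Iio c).chargeAt_eq c
  rw [chargeAt, h₁, compl_inter_self, ncard_empty] at this
  linarith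

lemma charge_beta (r : ℤ) (l : SeqPartition) : charge (beta r l) = r := by
  obtain ⟨N, hN⟩ := l.eventually_zero
  have hlast : betaSeq r l N = r - N - 1 := by simp [betaSeq, hN N le_rfl]; ring
  have hbeads : beta r l ∩ Ici (r - N - 1) = betaSeq r l '' Iic N := by
    rw [beta_eq_range_betaSeq, ← hlast]
    ext x
    simp only [mem_inter_iff, mem_range, mem_Ici, mem_image, mem_Iic]
    constructor
    · rintro ⟨⟨n, rfl⟩, h⟩
      exact ⟨n, (betaSeq_strictAnti r l).le_iff_ge.1 h, rfl⟩
    · rintro ⟨n, hn, rfl⟩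
      exact ⟨⟨n, rfl⟩, (betaSeq_strictAnti r l).antitone hn⟩
  have hgaps : (beta r l)ᶜ ∩ Iio (r - N - 1) = ∅ := by
    rw [← sdiff_eq_compl_inter, sdiff_eq_empty]
    exact Iio_subset_beta r hN
  have := (isBetaSet_beta r l).chargeAt_eq (r - N - 1)
  rw [chargeAt, hbeads, hgaps, ncard_image_of_injective _ (betaSeq_strictAnti r l).injective,
    ncard_Iic_nat, ncard_empty] at this
  push_cast at this
  linarith

lemma IsBetaSet.beta_charge_ofBeta (hB : IsBetaSet B) : beta (charge B) (ofBeta B) = B := by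
  obtain ⟨r, hr⟩ := hB.exists_beta_ofBeta
  have : charge B = r := hr ▸ charge_beta r _
  rwa [this]

end Charge

def runner (s : ℕ) (B : Set ℤ) (j : ZMod s) : Set ℤ := {z | (j.val : ℤ) + s * z ∈ B}

lemma runner_compl (s : ℕ) (B : Set ℤ) (j : ZMod s) : runner s Bᶜ j = (runner s B j)ᶜ := rfl

lemma quot_eq_ofBeta_runner (s : ℕ) (l : SeqPartition) (j : ZMod s) :
    quot s l j = ofBeta (runner s (beta 0 l) j) := rfl

section Runner

variable {s : ℕ} [NeZero s]

lemma val_cast_add_mul_ediv (x : ℤ) : ((x : ZMod s).val : ℤ) + s * (x / s) = x := by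
  rw [ZMod.val_intCast, Int.emod_add_mul_ediv]

lemma cast_val_add_mul (j : ZMod s) (z : ℤ) : (((j.val : ℤ) + s * z : ℤ) : ZMod s) = j := by
  simp

lemma val_add_mul_ediv (j : ZMod s) (z : ℤ) : ((j.val : ℤ) + s * z) / s = z := by
  rw [Int.add_mul_ediv_left _ _ (by exact_mod_cast NeZero.ne s),
    Int.ediv_eq_zero_of_lt (by positivity) (by exact_mod_cast ZMod.val_lt j), zero_add]

variable (s) in
lemma mem_iff_ediv_mem_runner (B : Set ℤ) (x : ℤ) : x ∈ B ↔ x / s ∈ runner s B x := by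
  rw [runner, mem_ofPred_eq, val_cast_add_mul_ediv]

variable (s) in
lemma ext_runner {B B' : Set ℤ} (h : ∀ j, runner s B j = runner s B' j) : B = B' := by
  ext x
  rw [mem_iff_ediv_mem_runner s, h, ← mem_iff_ediv_mem_runner]

lemma exists_runner_eq (u : ZMod s → Set ℤ) : ∃ B, ∀ j, runner s B j = u j :=
  ⟨{x | x / s ∈ u x}, fun j => by
    ext z
    simp only [runner, mem_ofPred_eq, val_add_mul_ediv, cast_val_add_mul]⟩

lemma image_runner (S : Set ℤ) (j : ZMod s) :
    (fun z => (j.val : ℤ) + s * z) '' runner s S j = {y ∈ S | (y : ZMod s) = j} := by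
  ext y
  constructor
  · rintro ⟨z, hz, rfl⟩
    exact ⟨hz, cast_val_add_mul j z⟩
  · rintro ⟨hy, rfl⟩
    exact ⟨y / s, by rwa [runner, mem_ofPred_eq, val_cast_add_mul_ediv], val_cast_add_mul_ediv y⟩

lemma ncard_runner (S : Set ℤ) (j : ZMod s) :
    (runner s S j).ncard = {y ∈ S | (y : ZMod s) = j}.ncard := by
  rw [← image_runner, ncard_image_of_injective]
  intro z z' h
  simpa [NeZero.ne s] using h

variable (s) in
lemma ncard_eq_sum_ncard_runner {S : Set ℤ} (hS : S.Finite) :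
    S.ncard = ∑ j : ZMod s, (runner s S j).ncard := by
  simp only [ncard_runner]
  rw [ncard_eq_toFinset_card S hS, Finset.card_eq_sum_card_fiberwise
    (f := fun y : ℤ => (y : ZMod s)) (t := Finset.univ) fun _ _ => Finset.mem_univ _]
  refine Finset.sum_congr rfl fun j _ => ?_
  rw [← ncard_coe_finset]
  congr
  ext
  simp

lemma runner_inter_Ici (B : Set ℤ) {j : ZMod s} {x w : ℤ} (h₁ : x ≤ j.val + s * w)
    (h₂ : (j.val : ℤ) + s * w < x + s) : runner s (B ∩ Ici x) j = runner s B j ∩ Ici w := by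
  have hs : (0 : ℤ) < s := by exact_mod_cast NeZero.pos s
  ext z
  simp only [runner, mem_inter_iff, mem_ofPred_eq, mem_Ici]
  refine and_congr_right fun _ => ⟨fun h => ?_, fun h => ?_⟩ <;> nlinarith

lemma runner_inter_Iio (B : Set ℤ) {j : ZMod s} {x w : ℤ} (h₁ : x ≤ j.val + s * w)
    (h₂ : (j.val : ℤ) + s * w < x + s) : runner s (B ∩ Iio x) j = runner s B j ∩ Iio w := by
  have hs : (0 : ℤ) < s := by exact_mod_cast NeZero.pos s
  ext z
  simp only [runner, mem_inter_iff, mem_ofPred_eq, mem_Iio]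
  refine and_congr_right fun _ => ⟨fun h => ?_, fun h => ?_⟩ <;> nlinarith

variable {B : Set ℤ}

lemma isBetaSet_runner (hB : IsBetaSet B) (j : ZMod s) : IsBetaSet (runner s B j) := by
  obtain ⟨⟨a, ha⟩, b, hb⟩ := hB
  have hs : (1 : ℤ) ≤ s := by exact_mod_cast NeZero.one_le
  have hj : (0 : ℤ) ≤ j.val := by positivity
  refine ⟨⟨min 0 (a - j.val), fun z hz => ha ?_⟩, max 0 b, fun z hz => ?_⟩
  · simp only [mem_Iio, lt_min_iff] at hz ⊢
    nlinarith
  · have := hb hz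
    simp only [le_max_iff]
    rcases le_or_gt z 0 with h | h
    · exact Or.inl h
    · right; nlinarith

variable (s) in
lemma isBetaSet_of_runner (h : ∀ j : ZMod s, IsBetaSet (runner s B j)) : IsBetaSet B := by
  choose a ha using fun j => (h j).1
  have hbdd : ∀ j, ∃ b, ∀ z ∈ runner s B j, z ≤ b := fun j => (h j).2
  choose b hb using hbdd
  have hs : (0 : ℤ) < s := by exact_mod_cast NeZero.pos s
  refine ⟨⟨Finset.univ.inf' Finset.univ_nonempty a * s, fun x hx => ?_⟩,
    (Finset.univ.sup' Finset.univ_nonempty b + 1) * s, fun x hx => ?_⟩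
  · rw [mem_iff_ediv_mem_runner s]
    refine ha _ ((Int.ediv_lt_iff_lt_mul hs).2 (hx.trans_le ?_))
    exact mul_le_mul_of_nonneg_right (Finset.inf'_le _ (Finset.mem_univ _)) hs.le
  · rw [mem_iff_ediv_mem_runner s] at hx
    have := (hb _ _ hx).trans (Finset.le_sup' b (Finset.mem_univ (x : ZMod s)))
    exact ((Int.ediv_lt_iff_lt_mul hs).1 (Int.lt_add_one_of_le this)).le

variable (s) in
lemma IsBetaSet.charge_eq_sum_charge_runner (hB : IsBetaSet B) :
    charge B = ∑ j : ZMod s, charge (runner s B j) := by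
  simp only [charge, chargeAt]
  rw [ncard_eq_sum_ncard_runner s (hB.finite_inter_Ici 0),
    ncard_eq_sum_ncard_runner s (hB.finite_compl_inter_Iio 0)]
  push_cast
  rw [← Finset.sum_sub_distrib]
  refine Finset.sum_congr rfl fun j _ => ?_
  have h₁ : (0 : ℤ) ≤ j.val + s * 0 := by positivity
  have h₂ : (j.val : ℤ) + s * 0 < 0 + s := by
    rw [mul_zero, add_zero, zero_add]
    exact_mod_cast ZMod.val_lt j
  rw [runner_inter_Ici B h₁ h₂, runner_inter_Iio Bᶜ h₁ h₂, runner_compl]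

end Runner

section Core

variable {s : ℕ} [NeZero s] {B : Set ℤ}

lemma val_add_mul_mem_coreBeta_iff (B : Set ℤ) (j : ZMod s) (w : ℤ) :
    (j.val : ℤ) + s * w ∈ coreBeta s B ↔ 0 < chargeAt (runner s B j) w := by
  set x : ℤ := j.val + s * w
  have hmod : ∀ y : ℤ, y ≡ x [ZMOD s] ↔ (y : ZMod s) = j := fun y => by
    rw [← ZMod.intCast_eq_intCast_iff, cast_val_add_mul]
  have hgaps : {y | y ∉ B ∧ y ≡ x [ZMOD s] ∧ y < x} = {y ∈ Bᶜ ∩ Iio x | (y : ZMod s) = j} := by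
    ext y
    simp only [mem_ofPred_eq, mem_inter_iff, mem_compl_iff, mem_Iio, hmod]
    tauto
  have hbeads : {b | b ∈ B ∧ b ≡ x [ZMOD s] ∧ x ≤ b} = {y ∈ B ∩ Ici x | (y : ZMod s) = j} := by
    ext y
    simp only [mem_ofPred_eq, mem_inter_iff, mem_Ici, hmod]
    tauto
  have h₂ : x < x + s := by simpa using NeZero.pos s
  rw [coreBeta, mem_ofPred_eq, hgaps, hbeads, ← ncard_runner, ← ncard_runner,
    runner_inter_Iio Bᶜ le_rfl h₂, runner_inter_Ici B le_rfl h₂, runner_compl, chargeAt]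
  omega

lemma IsBetaSet.runner_coreBeta (hB : IsBetaSet B) (j : ZMod s) :
    runner s (coreBeta s B) j = Iio (charge (runner s B j)) := by
  ext w
  rw [runner, mem_ofPred_eq, val_add_mul_mem_coreBeta_iff, (isBetaSet_runner hB j).chargeAt_eq,
    mem_Iio, sub_pos]

lemma isBetaSet_coreBeta (hB : IsBetaSet B) : IsBetaSet (coreBeta s B) :=
  isBetaSet_of_runner s fun j => hB.runner_coreBeta j ▸ isBetaSet_Iio _

lemma IsBetaSet.charge_coreBeta (hB : IsBetaSet B) : charge (coreBeta s B) = charge B := by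
  simp only [(isBetaSet_coreBeta hB).charge_eq_sum_charge_runner s, hB.runner_coreBeta,
    charge_Iio, ← hB.charge_eq_sum_charge_runner s]

lemma beta_zero_core (l : SeqPartition) : beta 0 (core s l) = coreBeta s (beta 0 l) := by
  have hB := isBetaSet_beta 0 l
  have := (isBetaSet_coreBeta (s := s) hB).beta_charge_ofBeta
  rwa [hB.charge_coreBeta, charge_beta] at this

lemma IsBetaSet.eq_of_charge_runner_eq_of_ofBeta_runner_eq {B' : Set ℤ} (hB : IsBetaSet B)
    (hB' : IsBetaSet B') (hc : ∀ j, charge (runner s B j) = charge (runner s B' j))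
    (hq : ∀ j, ofBeta (runner s B j) = ofBeta (runner s B' j)) : B = B' :=
  ext_runner s fun j => by
    rw [← (isBetaSet_runner hB j).beta_charge_ofBeta,
      ← (isBetaSet_runner hB' j).beta_charge_ofBeta, hc, hq]

lemma IsBetaSet.exists_coreBeta_eq_charge_eq_ofBeta_runner_eq (hB : IsBetaSet B)
    (υ : ZMod s → SeqPartition) : ∃ B', IsBetaSet B' ∧ coreBeta s B' = coreBeta s B ∧
      charge B' = charge B ∧ ∀ j, ofBeta (runner s B' j) = υ j := by
  obtain ⟨B', hrun⟩ := exists_runner_eq fun j => beta (charge (runner s B j)) (υ j)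
  have hB' : IsBetaSet B' := isBetaSet_of_runner s fun j => hrun j ▸ isBetaSet_beta _ _
  have hcharge : ∀ j, charge (runner s B' j) = charge (runner s B j) := fun j => by
    rw [hrun, charge_beta]
  refine ⟨B', hB', ext_runner s fun j => ?_, ?_, fun j => by rw [hrun, ofBeta_beta]⟩
  · rw [hB'.runner_coreBeta, hB.runner_coreBeta, hcharge]
  · rw [hB'.charge_eq_sum_charge_runner s, hB.charge_eq_sum_charge_runner s]
    exact Finset.sum_congr rfl fun j _ => hcharge j

end Core

end SeqPartition

open SeqPartition in
/-- A partition is determined by its `s`-core and `s`-quotient; moreover any `s`-core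
and any `(ℤ/sℤ)`-tuple of partitions arise as the `s`-core and `s`-quotient of some
partition. -/
theorem core_quot_determine (s : ℕ) (hs : 0 < s) :
    (∀ l m : SeqPartition, core s l = core s m → (∀ j : ZMod s, quot s l j = quot s m j) →
      l = m) ∧
    (∀ σ : SeqPartition, IsCore s σ → ∀ υ : ZMod s → SeqPartition,
      ∃ l : SeqPartition, core s l = σ ∧ ∀ j : ZMod s, quot s l j = υ j) := by
  have : NeZero s := ⟨hs.ne'⟩
  constructor
  · intro l m hcore hquot
    have hB := isBetaSet_beta 0 l
    have hB' := isBetaSet_beta 0 m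
    have hc : coreBeta s (beta 0 l) = coreBeta s (beta 0 m) := by
      rw [← beta_zero_core, ← beta_zero_core, hcore]
    refine (beta_injective (hB.eq_of_charge_runner_eq_of_ofBeta_runner_eq hB' (fun j => ?_)
      hquot)).2
    rw [← Set.Iio_inj, ← hB.runner_coreBeta, ← hB'.runner_coreBeta, hc]
  · intro σ hσ υ
    obtain ⟨B, hB, hcore, hcharge, hquot⟩ :=
      (isBetaSet_beta 0 σ).exists_coreBeta_eq_charge_eq_ofBeta_runner_eq υ
    have hB0 : beta 0 (ofBeta B) = B := by
      simpa [hcharge, charge_beta] using hB.beta_charge_ofBeta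
    refine ⟨ofBeta B, ?_, fun j => ?_⟩
    · rw [core, hB0, hcore, ← beta_zero_core, hσ, ofBeta_beta]
    · rw [quot_eq_ofBeta_runner, hB0, hquot]
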